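/- Let F be an n-uniform hypergraph with exactly 2r vertices whose maximum degree is at most 2^(n-2)/(e·n), where e denotes Euler's number (e = exp 1). Then for every partition of the vertex set of F into r pairs (v₁,v₁'), …, (v_r,v_r') there exists a proper 2-coloring of the vertices of F (no hyperedge monochromatic) such that v_i and v_i' receive different colors for every i = 1, …, r. -/

import Mathlib

open Finset

/-- A (finite) hypergraph: a vertex set and a family of hyperedges. -/
structure FinHypergraph (α : Type*) where
  V : Finset α
  E : Finset (Finset α)

namespace FinHypergraph

variable {α : Type*} [DecidableEq α]

/-- `H` is an `n`-uniform hypergraph: every hyperedge is an `n`-element subset of `V`. -/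
def IsUniform (H : FinHypergraph α) (n : ℕ) : Prop :=
  (∀ e ∈ H.E, e ⊆ H.V) ∧ (∀ e ∈ H.E, e.card = n)

/-- The degree of a vertex: the number of hyperedges containing it. -/
def degree (H : FinHypergraph α) (v : α) : ℕ :=
  (H.E.filter fun e => v ∈ e).card

/-- The neighborhood size of a hyperedge `e`: the number of hyperedges `e' ≠ e`
meeting `e`. -/
def nbhdSize (H : FinHypergraph α) (e : Finset α) : ℕ :=
  (H.E.filter fun e' => e' ≠ e ∧ (e' ∩ e).Nonempty).card

/-- Maker has a winning pairing strategy on `H`: there are a first vertex `v₀ ∈ V` and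
pairwise disjoint pairs from `V \ {v₀}` covering all but at most one vertex of `V \ {v₀}`,
such that any set consisting of `v₀` together with exactly one vertex from each pair
contains a hyperedge. -/
def MakerPairingWin (H : FinHypergraph α) : Prop :=
  ∃ v₀ ∈ H.V, ∃ P : Finset (Finset α),
    (∀ p ∈ P, p.card = 2 ∧ p ⊆ H.V.erase v₀) ∧
    (∀ p ∈ P, ∀ q ∈ P, p ≠ q → Disjoint p q) ∧
    ((H.V.erase v₀) \ P.sup id).card ≤ 1 ∧
    (∀ S : Finset α, S ⊆ P.sup id → (∀ p ∈ P, (S ∩ p).card = 1) →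
      ∃ e ∈ H.E, e ⊆ insert v₀ S)

/-- Maker has a winning *pure* pairing strategy on `H`: there are pairwise disjoint pairs
of vertices covering all but at most one vertex of `V`, such that any set consisting of
exactly one vertex from each pair contains a hyperedge. -/
def MakerPurePairingWin (H : FinHypergraph α) : Prop :=
  ∃ P : Finset (Finset α),
    (∀ p ∈ P, p.card = 2 ∧ p ⊆ H.V) ∧
    (∀ p ∈ P, ∀ q ∈ P, p ≠ q → Disjoint p q) ∧
    (H.V \ P.sup id).card ≤ 1 ∧
    (∀ S : Finset α, S ⊆ P.sup id → (∀ p ∈ P, (S ∩ p).card = 1) →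
      ∃ e ∈ H.E, e ⊆ S)

end FinHypergraph

/-- A literal: a variable (a natural number) together with a polarity. -/
abbrev Lit : Type := ℕ × Bool

/-- A clause: a finite set of literals. -/
abbrev Clause : Type := Finset Lit

/-- A CNF formula: a finite set of clauses. -/
abbrev CnfFormula : Type := Finset Clause

/-- The literals of a clause are over pairwise distinct variables. -/
def distinctVars (C : Clause) : Prop :=
  ∀ l ∈ C, ∀ l' ∈ C, l.1 = l'.1 → l = l'

/-- A CNF formula is satisfiable if some assignment makes a literal of every clause true. -/
def CnfSatisfiable (F : CnfFormula) : Prop :=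
  ∃ σ : ℕ → Bool, ∀ C ∈ F, ∃ l ∈ C, σ l.1 = l.2

/-- The number of clauses of `F` in which the variable `x` occurs (in either polarity). -/
def varOcc (F : CnfFormula) (x : ℕ) : ℕ :=
  (F.filter fun C => ∃ b : Bool, (x, b) ∈ C).card

/-- The number of clauses of `F` in which the literal `l` occurs. -/
def litOcc (F : CnfFormula) (l : Lit) : ℕ :=
  (F.filter fun C => l ∈ C).card

/-- `F` is a `k`-CNF formula: every clause has exactly `k` literals over distinct variables. -/
def isKCNF (F : CnfFormula) (k : ℕ) : Prop :=
  ∀ C ∈ F, C.card = k ∧ distinctVars C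

/-- The number of clauses of `F` distinct from `C` sharing a variable with `C`. -/
def clauseNbhd (F : CnfFormula) (C : Clause) : ℕ :=
  (F.filter fun D => D ≠ C ∧ ∃ l ∈ C, ∃ b : Bool, (l.1, b) ∈ D).card

/-- The number of distinct variables of `F`. -/
def numVarsCnf (F : CnfFormula) : ℕ := (F.sup fun C => C.image Prod.fst).card

/-- `F` is minimal unsatisfiable. -/
def MinimalUnsat (F : CnfFormula) : Prop :=
  ¬ CnfSatisfiable F ∧ ∀ C ∈ F, CnfSatisfiable (F.erase C)

/-- `F` belongs to MU(1): minimal unsatisfiable with (#clauses) − (#variables) = 1. -/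
def MU1 (F : CnfFormula) : Prop :=
  MinimalUnsat F ∧ F.card = numVarsCnf F + 1

/-! Orient every pair once and for all, and recolour by flipping the pairs in a random set
`T`. This respects the pairing, and an edge containing a whole pair is always bichromatic.
Every other edge meets exactly `n` pairs, and it is monochromatic of a given colour iff `T`
agrees with a fixed pattern on these pairs: an event of probability `2⁻ⁿ` sharing pairs with at
most `2 · 2n · Δ - 1 ≤ 2ⁿ / e - 1` other such events, where `Δ` bounds the degrees. The
symmetric local lemma therefore produces a good `T`. -/

open Real
open scoped symmDiff

namespace LocalLemma

variable {ι β : Type*} [DecidableEq β]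

-- Event `i` for a uniformly random `T ⊆ U` is `T ∩ A i = B i`; probabilities become counts.
def avoiders (U : Finset β) (A B : ι → Finset β) (S : Finset ι) : Finset (Finset β) :=
  {T ∈ U.powerset | ∀ i ∈ S, T ∩ A i ≠ B i}

variable {U : Finset β} {A B : ι → Finset β}

lemma avoiders_empty : avoiders U A B ∅ = U.powerset := by
  simp [avoiders]

lemma avoiders_anti {S S' : Finset ι} (h : S ⊆ S') : avoiders U A B S' ⊆ avoiders U A B S :=
  monotone_filter_right _ fun _ _ hT i hi => hT i (h hi)

lemma card_avoiders_fiber_le {S : Finset ι} {X Y Z : Finset β} (hXU : X ⊆ U) (hY : Y ⊆ X)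
    (hZ : Z ⊆ X) (hS : ∀ j ∈ S, Disjoint (A j) X) :
    #{T ∈ avoiders U A B S | T ∩ X = Y} ≤ #{T ∈ avoiders U A B S | T ∩ X = Z} := by
  -- `T ↦ T ∆ (Y ∆ Z)` maps the fibre over `Y` to the one over `Z` and fixes every `T ∩ A j`.
  have hYZ : Y ∆ Z ⊆ X := symmDiff_subset_union.trans (union_subset hY hZ)
  refine card_le_card_of_injOn (· ∆ (Y ∆ Z)) (fun T hT => ?_)
    ((symmDiff_left_injective _).injOn)
  simp only [coe_filter, avoiders, mem_filter, mem_powerset, Set.mem_ofPred_eq] at hT ⊢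
  obtain ⟨⟨hTU, hTS⟩, hTX⟩ := hT
  refine ⟨⟨symmDiff_subset_union.trans (union_subset hTU (hYZ.trans hXU)), fun j hj => ?_⟩, ?_⟩
  · rw [← inf_eq_inter, inf_symmDiff_distrib_right, inf_comm (Y ∆ Z),
      disjoint_iff.1 ((hS j hj).mono_right hYZ), symmDiff_bot]
    exact hTS j hj
  · rw [← inf_eq_inter, inf_symmDiff_distrib_right, inf_eq_inter, inf_eq_inter, hTX,
      inter_eq_left.2 hYZ, symmDiff_symmDiff_cancel_left]

lemma card_avoiders_eq_two_pow_mul {S : Finset ι} {X Z : Finset β} (hXU : X ⊆ U) (hZ : Z ⊆ X)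
    (hS : ∀ j ∈ S, Disjoint (A j) X) :
    #(avoiders U A B S) = 2 ^ #X * #{T ∈ avoiders U A B S | T ∩ X = Z} := by
  rw [card_eq_sum_card_fiberwise (f := (· ∩ X)) (t := X.powerset)
    fun T _ => mem_powerset.2 inter_subset_right,
    sum_congr rfl fun Y hY => le_antisymm (card_avoiders_fiber_le hXU (mem_powerset.1 hY) hZ hS)
      (card_avoiders_fiber_le hXU hZ (mem_powerset.1 hY) hS),
    sum_const, card_powerset, smul_eq_mul]

variable [DecidableEq ι]

def dependents (I : Finset ι) (A : ι → Finset β) (i : ι) : Finset ι :=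
  {j ∈ I.erase i | ¬Disjoint (A j) (A i)}

lemma card_avoiders_insert (i : ι) (S : Finset ι) :
    #(avoiders U A B (insert i S)) + #{T ∈ avoiders U A B S | T ∩ A i = B i} =
      #(avoiders U A B S) := by
  have : avoiders U A B (insert i S) = {T ∈ avoiders U A B S | T ∩ A i ≠ B i} := by
    ext T
    simp only [avoiders, mem_filter, forall_mem_insert]
    tauto
  rw [this, add_comm]
  exact card_filter_add_card_filter_not _

lemma pow_mul_card_avoiders_le {x : ℝ} (hx : x ≤ 1) (S R : Finset ι)
    (hstep : ∀ R' ⊆ R, ∀ i ∈ R, i ∉ R' →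
      (#{T ∈ avoiders U A B (S ∪ R') | T ∩ A i = B i} : ℝ) ≤ x * #(avoiders U A B (S ∪ R'))) :
    (1 - x) ^ #R * #(avoiders U A B S) ≤ #(avoiders U A B (S ∪ R)) := by
  induction R using Finset.induction_on with
  | empty => simp
  | insert i R hi ih =>
    have hcount := card_avoiders_insert (U := U) (A := A) (B := B) i (S ∪ R)
    have hbad := hstep R (subset_insert i R) i (mem_insert_self i R) hi
    have hR := ih fun R' hR' j hj => hstep R' (hR'.trans (subset_insert i R)) j
      (mem_insert_of_mem hj)
    rw [← hcount] at hbad hR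
    push_cast at hbad hR
    rw [card_insert_of_notMem hi, union_insert, pow_succ']
    calc (1 - x) * (1 - x) ^ #R * (#(avoiders U A B S) : ℝ)
        ≤ (1 - x) * (#(avoiders U A B (insert i (S ∪ R))) +
            #{T ∈ avoiders U A B (S ∪ R) | T ∩ A i = B i}) := by
          rw [mul_assoc]; exact mul_le_mul_of_nonneg_left hR (sub_nonneg.2 hx)
      _ ≤ #(avoiders U A B (insert i (S ∪ R))) := by linarith

lemma card_dependents_add_one {I : Finset ι} {i : ι} (hi : i ∈ I) (hA : (A i).Nonempty) :
    #(dependents I A i) + 1 = #{j ∈ I | ¬Disjoint (A j) (A i)} := by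
  rw [dependents, filter_erase]
  exact card_erase_add_one (mem_filter.2 ⟨hi, by simpa using hA.ne_empty⟩)

lemma card_filter_inter_eq_le_mul_card_avoiders {I S : Finset ι} {x : ℝ} {d : ℕ} (hx0 : 0 ≤ x)
    (hx1 : x ≤ 1)
    (hBA : ∀ i ∈ I, B i ⊆ A i) (hAU : ∀ i ∈ I, A i ⊆ U)
    (hdep : ∀ i ∈ I, #(dependents I A i) ≤ d) (hx : ∀ i ∈ I, 1 ≤ x * (1 - x) ^ d * 2 ^ #(A i))
    (hS : S ⊆ I) {i : ι} (hi : i ∈ I) (hiS : i ∉ S) :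
    (#{T ∈ avoiders U A B S | T ∩ A i = B i} : ℝ) ≤ x * #(avoiders U A B S) := by
  -- The ratio of the two counts is `ℙ(event i | no event of S)` in the usual induction.
  induction S using Finset.strongInduction generalizing i with
  | H S ih =>
  set S₁ := {j ∈ S | ¬Disjoint (A j) (A i)}
  set S₂ := {j ∈ S | Disjoint (A j) (A i)}
  have hS₂ : S₂ ∪ S₁ = S := filter_union_filter_not_eq _ S
  have hchain : (1 - x) ^ #S₁ * #(avoiders U A B S₂) ≤ #(avoiders U A B S) := by
    refine hS₂ ▸ pow_mul_card_avoiders_le hx1 S₂ S₁ fun R hR j hj hjR => ?_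
    have hjS : j ∈ S := filter_subset _ S hj
    have hj₂ : j ∉ S₂ ∪ R := by
      rw [mem_union]
      exact fun h => h.elim (fun h₂ => (mem_filter.1 hj).2 (mem_filter.1 h₂).2) hjR
    have hsub : S₂ ∪ R ⊆ S := union_subset (filter_subset _ S) (hR.trans (filter_subset _ S))
    exact ih _ ((ssubset_iff_of_subset hsub).2 ⟨j, hjS, hj₂⟩) (hsub.trans hS) (hS hjS) hj₂
  have hindep := card_avoiders_eq_two_pow_mul (A := A) (B := B) (S := S₂) (hAU i hi) (hBA i hi)
    fun j hj => (mem_filter.1 hj).2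
  have hS₁ : #S₁ ≤ d := (card_le_card fun j hj => by
    simp only [S₁, dependents, mem_filter, mem_erase] at hj ⊢
    exact ⟨⟨fun h => hiS (h ▸ hj.1), hS hj.1⟩, hj.2⟩).trans (hdep i hi)
  calc (#{T ∈ avoiders U A B S | T ∩ A i = B i} : ℝ)
      ≤ #{T ∈ avoiders U A B S₂ | T ∩ A i = B i} := by
        exact_mod_cast card_le_card (filter_subset_filter _ (avoiders_anti (filter_subset _ S)))
    _ ≤ x * (1 - x) ^ d * 2 ^ #(A i) * #{T ∈ avoiders U A B S₂ | T ∩ A i = B i} :=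
        le_mul_of_one_le_left (Nat.cast_nonneg _) (hx i hi)
    _ = x * ((1 - x) ^ d * #(avoiders U A B S₂)) := by rw [hindep]; push_cast; ring
    _ ≤ x * ((1 - x) ^ #S₁ * #(avoiders U A B S₂)) := by
        gcongr _ * (?_ * _)
        exact pow_le_pow_of_le_one (sub_nonneg.2 hx1) (by linarith) hS₁
    _ ≤ x * #(avoiders U A B S) := by gcongr

theorem exists_avoiding_of_one_le_mul_pow {I : Finset ι} {x : ℝ} {d : ℕ} (hx0 : 0 ≤ x) (hx1 : x < 1)
    (hBA : ∀ i ∈ I, B i ⊆ A i) (hAU : ∀ i ∈ I, A i ⊆ U)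
    (hdep : ∀ i ∈ I, #(dependents I A i) ≤ d) (hx : ∀ i ∈ I, 1 ≤ x * (1 - x) ^ d * 2 ^ #(A i)) :
    ∃ T ⊆ U, ∀ i ∈ I, T ∩ A i ≠ B i := by
  have h := pow_mul_card_avoiders_le (U := U) (A := A) (B := B) hx1.le ∅ I
    fun R hR i hi hiR => by
      simpa using card_filter_inter_eq_le_mul_card_avoiders hx0 hx1.le hBA hAU hdep hx hR hi hiR
  rw [avoiders_empty, empty_union, card_powerset] at h
  have hpos : 0 < #(avoiders U A B I) := by
    have : (0 : ℝ) < (1 - x) ^ #I * (2 ^ #U : ℕ) := by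
      have : 0 < 1 - x := sub_pos.2 hx1
      positivity
    exact_mod_cast this.trans_le h
  obtain ⟨T, hT⟩ := card_pos.1 hpos
  simp only [avoiders, mem_filter, mem_powerset] at hT
  exact ⟨T, hT⟩

lemma one_le_exp_one_mul_mul_inv_mul_one_sub_inv_pow (d : ℕ) :
    1 ≤ exp 1 * (d + 1) * (((d : ℝ) + 2)⁻¹ * (1 - ((d : ℝ) + 2)⁻¹) ^ d) := by
  have h := Real.one_add_inv_pow_le_exp (n := d + 1)
  have key : (1 + ((d + 1 : ℕ) : ℝ)⁻¹) ^ (d + 1) *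
      ((d + 1) * (((d : ℝ) + 2)⁻¹ * (1 - ((d : ℝ) + 2)⁻¹) ^ d)) = 1 := by
    push_cast
    rw [show (1 : ℝ) + ((d : ℝ) + 1)⁻¹ = (d + 2) / (d + 1) by field_simp; ring,
      show (1 : ℝ) - ((d : ℝ) + 2)⁻¹ = (d + 1) / (d + 2) by field_simp; ring, div_pow, div_pow]
    field_simp
    ring
  nlinarith [show 0 ≤ ((d : ℝ) + 1) * (((d : ℝ) + 2)⁻¹ * (1 - ((d : ℝ) + 2)⁻¹) ^ d) by
    have : ((d : ℝ) + 2)⁻¹ ≤ 1 := inv_le_one_of_one_le₀ (by linarith [d.cast_nonneg (α := ℝ)])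
    have : 0 ≤ 1 - ((d : ℝ) + 2)⁻¹ := by linarith
    positivity]

theorem exists_avoiding {I : Finset ι} {k : ℕ} (hBA : ∀ i ∈ I, B i ⊆ A i)
    (hAU : ∀ i ∈ I, A i ⊆ U) (hk : ∀ i ∈ I, k ≤ #(A i))
    (hdep : ∀ i ∈ I, exp 1 * (#(dependents I A i) + 1) ≤ 2 ^ k) :
    ∃ T ⊆ U, ∀ i ∈ I, T ∩ A i ≠ B i := by
  rcases I.eq_empty_or_nonempty with rfl | hI
  · exact ⟨∅, empty_subset U, by simp⟩
  obtain ⟨i₀, hi₀, hd⟩ := exists_mem_eq_sup I hI fun i => #(dependents I A i)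
  set d := I.sup fun i => #(dependents I A i)
  -- `x = 1 / (d + 2)` works because `(1 + 1 / (d + 1)) ^ (d + 1) ≤ e`.
  have hx1 : ((d : ℝ) + 2)⁻¹ < 1 := inv_lt_one_of_one_lt₀ (by linarith [d.cast_nonneg (α := ℝ)])
  refine exists_avoiding_of_one_le_mul_pow (by positivity) hx1 hBA hAU
    (fun i hi => le_sup (f := fun i => #(dependents I A i)) hi) fun i hi => ?_
  calc 1 ≤ exp 1 * (d + 1) * (((d : ℝ) + 2)⁻¹ * (1 - ((d : ℝ) + 2)⁻¹) ^ d) :=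
        one_le_exp_one_mul_mul_inv_mul_one_sub_inv_pow d
    _ ≤ 2 ^ #(A i) * (((d : ℝ) + 2)⁻¹ * (1 - ((d : ℝ) + 2)⁻¹) ^ d) := by
        gcongr
        calc exp 1 * (d + 1) ≤ 2 ^ k := by simpa [hd] using hdep i₀ hi₀
          _ ≤ 2 ^ #(A i) := pow_le_pow_right₀ one_le_two (hk i hi)
    _ = _ := by ring

end LocalLemma

namespace FinHypergraph

open LocalLemma

def SplitsPairs {α : Type*} (P : Finset (Finset α)) (c : α → Bool) : Prop :=
  ∀ p ∈ P, ∀ u ∈ p, ∀ w ∈ p, u ≠ w → c u ≠ c w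

def Bichromatic {α : Type*} (c : α → Bool) (e : Finset α) : Prop :=
  (∃ v ∈ e, c v = true) ∧ (∃ v ∈ e, c v = false)

lemma exists_splitsPairs {α : Type*} [LinearOrder α] {P : Finset (Finset α)}
    (hpairs : ∀ p ∈ P, #p = 2) (hdisj : (P : Set (Finset α)).PairwiseDisjoint id) :
    ∃ o : α → Bool, SplitsPairs P o := by
  refine ⟨fun v => decide (∃ p ∈ P, v ∈ p ∧ ∃ w ∈ p, v < w), ?_⟩
  have key : ∀ p ∈ P, ∀ u ∈ p, ∀ w ∈ p, u < w →
      ¬ ∃ q ∈ P, w ∈ q ∧ ∃ z ∈ q, w < z := by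
    rintro p hp u hu w hw huw ⟨q, hq, hwq, z, hzq, hwz⟩
    obtain rfl : q = p := hdisj.elim_finset hq hp w hwq hw
    have : 2 < #q := two_lt_card_iff.2
      ⟨u, w, z, hu, hw, hzq, huw.ne, (huw.trans hwz).ne, hwz.ne⟩
    exact this.ne' (hpairs q hq)
  intro p hp u hu w hw huw
  rcases huw.lt_or_gt with h | h
  · simpa [key p hp u hu w hw h] using ⟨p, hp, hu, w, hw, h⟩
  · simpa [key p hp w hw u hu h] using ⟨p, hp, hw, u, hu, h⟩

variable {α : Type*} [DecidableEq α]

def pairsMeeting (P : Finset (Finset α)) (e : Finset α) : Finset (Finset α) :=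
  {p ∈ P | (p ∩ e).Nonempty}

def flipColoring (o : α → Bool) (T : Finset (Finset α)) (v : α) : Bool :=
  xor (o v) (decide (∃ p ∈ T, v ∈ p))

-- The pairs to flip for `e` to receive only the colour `b`.
def monoPattern (P : Finset (Finset α)) (o : α → Bool) (e : Finset α) (b : Bool) :
    Finset (Finset α) :=
  {p ∈ pairsMeeting P e | ∃ v ∈ p ∩ e, o v = !b}

def pairFreeEdges (H : FinHypergraph α) (P : Finset (Finset α)) : Finset (Finset α) :=
  {e ∈ H.E | ∀ p ∈ P, ¬p ⊆ e}

variable {H : FinHypergraph α} {P T : Finset (Finset α)} {o : α → Bool} {n : ℕ}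

lemma pairsMeeting_subset (e : Finset α) : pairsMeeting P e ⊆ P := filter_subset _ _

lemma monoPattern_subset (e : Finset α) (b : Bool) : monoPattern P o e b ⊆ pairsMeeting P e :=
  filter_subset _ _

lemma flipColoring_of_mem (hdisj : (P : Set (Finset α)).PairwiseDisjoint id) (hT : T ⊆ P)
    {p : Finset α} {v : α} (hp : p ∈ P) (hv : v ∈ p) :
    flipColoring o T v = xor (o v) (decide (p ∈ T)) := by
  have : (∃ q ∈ T, v ∈ q) ↔ p ∈ T :=
    ⟨fun ⟨q, hq, hvq⟩ => hdisj.elim_finset (hT hq) hp v hvq hv ▸ hq, fun h => ⟨p, h, hv⟩⟩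
  simp only [flipColoring, this]

lemma splitsPairs_flipColoring (hdisj : (P : Set (Finset α)).PairwiseDisjoint id)
    (ho : SplitsPairs P o) (hT : T ⊆ P) : SplitsPairs P (flipColoring o T) := by
  intro p hp u hu w hw huw
  rw [flipColoring_of_mem hdisj hT hp hu, flipColoring_of_mem hdisj hT hp hw]
  exact fun h => ho p hp u hu w hw huw (Bool.xor_left_inj.1 h)

lemma bichromatic_of_subset {c : α → Bool} (hc : SplitsPairs P c) {p e : Finset α} (hp : p ∈ P)
    (hp2 : #p = 2) (hpe : p ⊆ e) : Bichromatic c e := by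
  obtain ⟨u, w, huw, rfl⟩ := card_eq_two.1 hp2
  have hne := hc _ hp u (by simp) w (by simp) huw
  cases hu : c u
  · exact ⟨⟨w, hpe (by simp), by simpa [hu] using hne.symm⟩, ⟨u, hpe (by simp), hu⟩⟩
  · exact ⟨⟨u, hpe (by simp), hu⟩, ⟨w, hpe (by simp), by simpa [hu] using hne.symm⟩⟩

lemma inter_pairsMeeting_eq_monoPattern (hdisj : (P : Set (Finset α)).PairwiseDisjoint id)
    (hT : T ⊆ P) {e : Finset α} {b : Bool} (h : ∀ v ∈ e, flipColoring o T v = b) :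
    T ∩ pairsMeeting P e = monoPattern P o e b := by
  ext p
  rw [mem_inter, monoPattern, mem_filter]
  constructor
  · rintro ⟨hpT, hpD⟩
    obtain ⟨v, hv⟩ := (mem_filter.1 hpD).2
    refine ⟨hpD, v, hv, ?_⟩
    have := h v (mem_inter.1 hv).2
    rw [flipColoring_of_mem hdisj hT (hT hpT) (mem_inter.1 hv).1] at this
    simpa [hpT] using this
  · rintro ⟨hpD, v, hv, hov⟩
    refine ⟨?_, hpD⟩
    have hpP := (mem_filter.1 hpD).1
    have := h v (mem_inter.1 hv).2
    rw [flipColoring_of_mem hdisj hT hpP (mem_inter.1 hv).1, hov] at this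
    cases b <;> simpa using this

lemma bichromatic_flipColoring (hdisj : (P : Set (Finset α)).PairwiseDisjoint id) (hT : T ⊆ P)
    {e : Finset α} (h : ∀ b, T ∩ pairsMeeting P e ≠ monoPattern P o e b) :
    Bichromatic (flipColoring o T) e := by
  constructor <;> by_contra hne <;> push Not at hne
  · exact h false (inter_pairsMeeting_eq_monoPattern hdisj hT fun v hv => by simpa using hne v hv)
  · exact h true (inter_pairsMeeting_eq_monoPattern hdisj hT fun v hv => by simpa using hne v hv)

lemma card_pairsMeeting (hpairs : ∀ p ∈ P, #p = 2)
    (hdisj : (P : Set (Finset α)).PairwiseDisjoint id) {e : Finset α} (he : e ⊆ P.sup id)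
    (hfree : ∀ p ∈ P, ¬p ⊆ e) :
    #(pairsMeeting P e) = #e := by
  have hcover : (pairsMeeting P e).biUnion (· ∩ e) = e := by
    ext v
    simp only [mem_biUnion, pairsMeeting, mem_filter, mem_inter]
    refine ⟨fun ⟨_, _, _, hv⟩ => hv, fun hv => ?_⟩
    obtain ⟨p, hp, hvp⟩ := mem_sup.1 (he hv)
    exact ⟨p, ⟨hp, v, mem_inter.2 ⟨hvp, hv⟩⟩, hvp, hv⟩
  have hone : ∀ p ∈ pairsMeeting P e, #(p ∩ e) = 1 := by
    intro p hp
    obtain ⟨hpP, hpe⟩ := mem_filter.1 hp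
    have : #(p ∩ e) < #p := card_lt_card
      ⟨inter_subset_left, fun h => hfree p hpP (h.trans inter_subset_right)⟩
    have := card_pos.2 hpe
    have := hpairs p hpP
    omega
  calc #(pairsMeeting P e) = ∑ p ∈ pairsMeeting P e, #(p ∩ e) := by
        rw [sum_congr rfl hone, card_eq_sum_ones]
    _ = #((pairsMeeting P e).biUnion (· ∩ e)) := (card_biUnion fun p hp q hq hpq =>
        (hdisj (mem_filter.1 hp).1 (mem_filter.1 hq).1 hpq).mono inter_subset_left
          inter_subset_left).symm
    _ = #e := by rw [hcover]

lemma card_sup_le_two_mul (hpairs : ∀ p ∈ P, #p = 2) {Q : Finset (Finset α)} (hQ : Q ⊆ P) :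
    #(Q.sup id) ≤ 2 * #Q := by
  rw [sup_eq_biUnion]
  calc #(Q.biUnion id) ≤ ∑ p ∈ Q, #p := card_biUnion_le
    _ = 2 * #Q := by
      rw [sum_congr rfl fun p hp => hpairs p (hQ hp), sum_const, smul_eq_mul, mul_comm]

lemma card_filter_not_disjoint_le_sum_degree (X : Finset α) :
    #{e ∈ H.E | ¬Disjoint e X} ≤ ∑ v ∈ X, H.degree v :=
  calc #{e ∈ H.E | ¬Disjoint e X} ≤ #(X.biUnion fun v => {e ∈ H.E | v ∈ e}) :=
        card_le_card fun e he => by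
          obtain ⟨heE, hX⟩ := mem_filter.1 he
          obtain ⟨v, hve, hvX⟩ := not_disjoint_iff.1 hX
          exact mem_biUnion.2 ⟨v, hvX, mem_filter.2 ⟨heE, hve⟩⟩
    _ ≤ ∑ v ∈ X, H.degree v := card_biUnion_le

lemma card_filter_not_disjoint_pairsMeeting_le (Q : Finset (Finset α)) :
    #{i ∈ H.pairFreeEdges P ×ˢ (univ : Finset Bool) | ¬Disjoint (pairsMeeting P i.1) Q} ≤
      2 * ∑ v ∈ Q.sup id, H.degree v := by
  rw [filter_product_left (fun e => ¬Disjoint (pairsMeeting P e) Q), card_product, card_univ,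
    Fintype.card_bool, mul_comm]
  gcongr
  refine (card_le_card fun e he => ?_).trans (card_filter_not_disjoint_le_sum_degree _)
  obtain ⟨he, hQ⟩ := mem_filter.1 he
  obtain ⟨p, hpe, hpQ⟩ := not_disjoint_iff.1 hQ
  obtain ⟨v, hv⟩ := (mem_filter.1 hpe).2
  exact mem_filter.2 ⟨(mem_filter.1 he).1, not_disjoint_iff.2
    ⟨v, (mem_inter.1 hv).2, mem_sup.2 ⟨p, hpQ, (mem_inter.1 hv).1⟩⟩⟩

lemma card_pairsMeeting_of_mem_pairFreeEdges (hU : H.IsUniform n) (hpairs : ∀ p ∈ P, #p = 2)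
    (hdisj : (P : Set (Finset α)).PairwiseDisjoint id) (hcover : P.sup id = H.V) {e : Finset α}
    (he : e ∈ H.pairFreeEdges P) : #(pairsMeeting P e) = n := by
  obtain ⟨heE, hfree⟩ := mem_filter.1 he
  exact (card_pairsMeeting hpairs hdisj (hcover ▸ hU.1 e heE) hfree).trans (hU.2 e heE)

lemma two_le_of_one_le_two_pow_div (hn : 1 ≤ n) (h : 1 ≤ (2 : ℝ) ^ (n - 2) / (exp 1 * n)) :
    2 ≤ n := by
  by_contra! hn2
  obtain rfl : n = 1 := by omega
  rw [Nat.sub_eq_zero_of_le (by norm_num), pow_zero, Nat.cast_one, mul_one,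
    one_le_div (exp_pos 1)] at h
  linarith [add_one_lt_exp one_ne_zero]

lemma exp_one_mul_card_dependents_add_one_le (hn : 1 ≤ n) (hU : H.IsUniform n)
    (hdeg : ∀ v, (H.degree v : ℝ) ≤ 2 ^ (n - 2) / (exp 1 * n)) (hpairs : ∀ p ∈ P, #p = 2)
    (hdisj : (P : Set (Finset α)).PairwiseDisjoint id) (hcover : P.sup id = H.V)
    {i : Finset α × Bool} (hi : i ∈ H.pairFreeEdges P ×ˢ univ) :
    exp 1 * (#(dependents (H.pairFreeEdges P ×ˢ univ) (fun i => pairsMeeting P i.1) i) + 1) ≤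
      2 ^ n := by
  set Δ : ℝ := 2 ^ (n - 2) / (exp 1 * n)
  have he := (mem_product.1 hi).1
  have hcard := card_pairsMeeting_of_mem_pairFreeEdges hU hpairs hdisj hcover he
  have hn2 : 2 ≤ n := by
    obtain ⟨v, hv⟩ : i.1.Nonempty := card_pos.1 (by rw [hU.2 _ (mem_filter.1 he).1]; omega)
    refine two_le_of_one_le_two_pow_div hn ((Nat.one_le_cast.2 ?_).trans (hdeg v))
    exact card_pos.2 ⟨i.1, mem_filter.2 ⟨(mem_filter.1 he).1, hv⟩⟩
  have hdep : #(dependents (H.pairFreeEdges P ×ˢ univ) (fun i => pairsMeeting P i.1) i) + 1 ≤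
      2 * ∑ v ∈ (pairsMeeting P i.1).sup id, H.degree v := by
    rw [card_dependents_add_one hi (card_pos.1 (by omega))]
    exact card_filter_not_disjoint_pairsMeeting_le _
  have hsum : ∑ v ∈ (pairsMeeting P i.1).sup id, (H.degree v : ℝ) ≤ 2 * n * Δ := by
    refine (sum_le_card_nsmul ((pairsMeeting P i.1).sup id) (fun v => (H.degree v : ℝ)) Δ
      fun v _ => hdeg v).trans ?_
    rw [nsmul_eq_mul, ← hcard]
    gcongr
    exact_mod_cast card_sup_le_two_mul hpairs (filter_subset _ P)
  calc exp 1 * (#(dependents (H.pairFreeEdges P ×ˢ univ) (fun i => pairsMeeting P i.1) i) + 1)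
      ≤ exp 1 * (2 * (2 * n * Δ)) := by
        have : ((#(dependents (H.pairFreeEdges P ×ˢ univ) (fun i => pairsMeeting P i.1) i) + 1 : ℕ)
            : ℝ) ≤ 2 * ∑ v ∈ (pairsMeeting P i.1).sup id, (H.degree v : ℝ) := by
          exact_mod_cast hdep
        push_cast at this
        gcongr
        linarith
    _ = 2 ^ n := by
        rw [← Nat.sub_add_cancel hn2, pow_add]
        simp only [Δ]
        field_simp
        push_cast [Nat.sub_add_cancel hn2]
        ring

end FinHypergraph

open FinHypergraph in
/-- Let `H` be an `n`-uniform hypergraph whose vertex set is partitioned into pairs and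
whose maximum degree is at most `2^(n-2)/(e·n)`. Then there is a proper 2-coloring of `H`
in which the two vertices of each pair receive different colors. -/
theorem proper_coloring_respecting_pairing (n : ℕ) (hn : 1 ≤ n) (H : FinHypergraph ℕ)
    (hU : H.IsUniform n)
    (hdeg : ∀ v : ℕ, (H.degree v : ℝ) ≤ 2 ^ (n - 2) / (Real.exp 1 * n))
    (P : Finset (Finset ℕ))
    (hpairs : ∀ p ∈ P, p.card = 2)
    (hdisj : ∀ p ∈ P, ∀ q ∈ P, p ≠ q → Disjoint p q)
    (hcover : P.sup id = H.V) :
    ∃ c : ℕ → Bool,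
      (∀ e ∈ H.E, (∃ v ∈ e, c v = true) ∧ (∃ v ∈ e, c v = false)) ∧
      (∀ p ∈ P, ∀ u ∈ p, ∀ w ∈ p, u ≠ w → c u ≠ c w) := by
  have hPdisj : (P : Set (Finset ℕ)).PairwiseDisjoint id := fun p hp q hq h => hdisj p hp q hq h
  obtain ⟨o, ho⟩ := exists_splitsPairs hpairs hPdisj
  obtain ⟨T, hTP, hT⟩ := LocalLemma.exists_avoiding (U := P)
    (I := H.pairFreeEdges P ×ˢ (univ : Finset Bool))
    (A := fun i : Finset ℕ × Bool => pairsMeeting P i.1)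
    (B := fun i : Finset ℕ × Bool => monoPattern P o i.1 i.2) (k := n)
    (fun i _ => monoPattern_subset i.1 i.2) (fun i _ => pairsMeeting_subset i.1)
    (fun i hi => (card_pairsMeeting_of_mem_pairFreeEdges hU hpairs hPdisj hcover
      (mem_product.1 hi).1).ge)
    fun i hi => exp_one_mul_card_dependents_add_one_le hn hU hdeg hpairs hPdisj hcover hi
  have hsplit := splitsPairs_flipColoring hPdisj ho hTP
  refine ⟨flipColoring o T, fun e he => ?_, hsplit⟩
  by_cases hfree : ∀ p ∈ P, ¬p ⊆ e
  · exact bichromatic_flipColoring hPdisj hTP fun b =>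
      hT (e, b) (mk_mem_product (mem_filter.2 ⟨he, hfree⟩) (mem_univ b))
  · push Not at hfree
    obtain ⟨p, hp, hpe⟩ := hfree
    exact bichromatic_of_subset hsplit hp (hpairs p hp) hpe
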